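/- arXiv:2105.12205 — 2 statements merged into one kernel-verified Lean document; each statement's English description precedes it below -/
import Mathlib

section
/- Let m ≥ 1 and n ≥ 1. Suppose interval bounds 0 < lS(j) ≤ uS(j) ≤ 1 for j = 1,…,m and 0 ≤ lQ(i,j) ≤ uQ(i,j) ≤ 1 for i = 1,…,n, j = 1,…,m are given, and the feasible set K of pairs (p, c) is nonempty. Then the infimum over (p, c) ∈ K of Σ_{i=1}^{n} max_{j=1,…,m} p(j)·c(i,j) equals the minimum over all m^n assignments ĵ : {1,…,n} → {1,…,m} of the optimal value of the linear program: minimize Σ_{i=1}^{n} x_{i,ĵ(i)} over x ∈ ℝ^{n×m} subject to Σ_{i,j} x_{ij} = 1; x_{ij} ≥ 0 for all i,j; lS(j) ≤ Σ_{i} x_{ij} ≤ uS(j) for all j; lQ(i,j)·Σ_{k} x_{kj} ≤ x_{ij} ≤ uQ(i,j)·Σ_{k} x_{kj} for all i,j; and x_{i,ĵ(i)} ≥ x_{ij} for all i,j. (This gives the lower conditional deviation-from-the-mode \underline{M}(S|Q) via the same constraints with minimization instead of maximization.) -/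
open Finset

/-- The credal feasible set `K`: pairs `(p, c)` where `p` is a prior PMF over the `m`
skill states respecting the interval bounds `lS ≤ p ≤ uS`, and `c j = P(Q | s_j)` are
conditional PMFs over the `n` answer states respecting `lQ ≤ c ≤ uQ`. -/
def feasibleK (m n : ℕ) (lS uS : Fin m → ℝ) (lQ uQ : Fin n → Fin m → ℝ) :
    Set ((Fin m → ℝ) × (Fin n → Fin m → ℝ)) :=
  { pc | (∀ j, 0 ≤ pc.1 j) ∧ (∑ j, pc.1 j = 1) ∧ (∀ j, lS j ≤ pc.1 j ∧ pc.1 j ≤ uS j) ∧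
    (∀ i j, 0 ≤ pc.2 i j) ∧ (∀ j, ∑ i, pc.2 i j = 1) ∧
    (∀ i j, lQ i j ≤ pc.2 i j ∧ pc.2 i j ≤ uQ i j) }

/-- The feasible set of the linear program associated with the assignment `jhat`:
joint-probability variables `x : Fin n → Fin m → ℝ` satisfying the linearized
credal constraints together with the mode constraints `x i (jhat i) ≥ x i j`. -/
def lpFeasible (m n : ℕ) (lS uS : Fin m → ℝ) (lQ uQ : Fin n → Fin m → ℝ)
    (jhat : Fin n → Fin m) : Set (Fin n → Fin m → ℝ) :=
  { x | (∑ i, ∑ j, x i j = 1) ∧ (∀ i j, 0 ≤ x i j) ∧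
    (∀ j, lS j ≤ ∑ i, x i j ∧ ∑ i, x i j ≤ uS j) ∧
    (∀ i j, lQ i j * ∑ k, x k j ≤ x i j ∧ x i j ≤ uQ i j * ∑ k, x k j) ∧
    (∀ i j, x i j ≤ x i (jhat i)) }

/-- The infimum over the credal set `K` of `∑ᵢ maxⱼ p(sⱼ)·P(qᵢ|sⱼ)` equals the minimum,
over all `m^n` assignments `jhat : {1,…,n} → {1,…,m}` (whose linear program is feasible),
of the optimal value of the linear program minimizing `∑ᵢ x_{i,jhat(i)}` subject to the
linearized credal constraints and the mode constraints `x_{i,jhat(i)} ≥ x_{ij}`. -/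
theorem lower_conditional_DM_by_linear_programs
    (m n : ℕ) (hm : 1 ≤ m) (hn : 1 ≤ n)
    (lS uS : Fin m → ℝ) (lQ uQ : Fin n → Fin m → ℝ)
    (hlS : ∀ j, 0 < lS j) (hSlu : ∀ j, lS j ≤ uS j) (huS : ∀ j, uS j ≤ 1)
    (hlQ : ∀ i j, 0 ≤ lQ i j) (hQlu : ∀ i j, lQ i j ≤ uQ i j) (huQ : ∀ i j, uQ i j ≤ 1)
    (hK : (feasibleK m n lS uS lQ uQ).Nonempty) :
    sInf ((fun pc => ∑ i, ⨆ j, pc.1 j * pc.2 i j) '' feasibleK m n lS uS lQ uQ) =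
      sInf { v : ℝ | ∃ jhat : Fin n → Fin m,
        (lpFeasible m n lS uS lQ uQ jhat).Nonempty ∧
        v = sInf ((fun x => ∑ i, x i (jhat i)) '' lpFeasible m n lS uS lQ uQ jhat) } := by
  haveI : Nonempty (Fin m) := ⟨⟨0, hm⟩⟩
  set K := feasibleK m n lS uS lQ uQ with hKdef
  set f : (Fin m → ℝ) × (Fin n → Fin m → ℝ) → ℝ := fun pc => ∑ i, ⨆ j, pc.1 j * pc.2 i j
    with hfdef
  set B : Set ℝ := { v : ℝ | ∃ jhat : Fin n → Fin m,
        (lpFeasible m n lS uS lQ uQ jhat).Nonempty ∧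
        v = sInf ((fun x => ∑ i, x i (jhat i)) '' lpFeasible m n lS uS lQ uQ jhat) }
    with hBdef
  -- forward map: from a credal pair produce an assignment and an LP-feasible point
  have fwd : ∀ pc ∈ K, ∃ jhat : Fin n → Fin m, ∃ x ∈ lpFeasible m n lS uS lQ uQ jhat,
      f pc = ∑ i, x i (jhat i) := by
    rintro ⟨p, c⟩ ⟨hp0, hps, hplu, hc0, hcs, hclu⟩
    have hjh : ∀ i : Fin n, ∃ j : Fin m, ∀ k, p k * c i k ≤ p j * c i j := fun i =>
      Finite.exists_max (fun j => p j * c i j)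
    choose jhat hjhat using hjh
    have hcol : ∀ j, ∑ i, p j * c i j = p j := by
      intro j; rw [← Finset.mul_sum, hcs j, mul_one]
    refine ⟨jhat, fun i j => p j * c i j, ⟨?_, ?_, ?_, ?_, ?_⟩, ?_⟩
    · rw [Finset.sum_comm]
      calc ∑ j, ∑ i, p j * c i j = ∑ j, p j := by
            refine Finset.sum_congr rfl fun j _ => hcol j
        _ = 1 := hps
    · exact fun i j => mul_nonneg (hp0 j) (hc0 i j)
    · intro j; rw [hcol j]; exact hplu j
    · intro i j
      rw [hcol j]
      refine ⟨?_, ?_⟩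
      · calc lQ i j * p j ≤ c i j * p j := mul_le_mul_of_nonneg_right (hclu i j).1 (hp0 j)
          _ = p j * c i j := mul_comm _ _
      · calc p j * c i j = c i j * p j := mul_comm _ _
          _ ≤ uQ i j * p j := mul_le_mul_of_nonneg_right (hclu i j).2 (hp0 j)
    · exact fun i j => hjhat i j
    · refine Finset.sum_congr rfl fun i _ => ?_
      exact le_antisymm (ciSup_le (hjhat i))
        (le_ciSup (f := fun j => p j * c i j) (Set.finite_range _).bddAbove (jhat i))
  -- backward map: from an LP-feasible point produce a credal pair with the same value
  have bwd : ∀ jhat : Fin n → Fin m, ∀ x ∈ lpFeasible m n lS uS lQ uQ jhat,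
      ∃ pc ∈ K, f pc = ∑ i, x i (jhat i) := by
    rintro jhat x ⟨hx1, hx0, hxS, hxQ, hxM⟩
    set p : Fin m → ℝ := fun j => ∑ i, x i j with hp
    have hppos : ∀ j, 0 < p j := fun j => lt_of_lt_of_le (hlS j) (hxS j).1
    have hcancel : ∀ i j, p j * (x i j / p j) = x i j := by
      intro i j; rw [mul_comm, div_mul_cancel₀ _ (hppos j).ne']
    refine ⟨⟨p, fun i j => x i j / p j⟩, ⟨fun j => (hppos j).le, ?_, hxS, ?_, ?_, ?_⟩, ?_⟩
    · rw [← hx1, Finset.sum_comm]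
    · exact fun i j => div_nonneg (hx0 i j) (hppos j).le
    · intro j
      rw [← Finset.sum_div, div_self (hppos j).ne']
    · intro i j
      constructor
      · exact (le_div_iff₀ (hppos j)).2 (hxQ i j).1
      · exact (div_le_iff₀ (hppos j)).2 (hxQ i j).2
    · refine Finset.sum_congr rfl fun i _ => ?_
      have : (⨆ j, p j * (x i j / p j)) = ⨆ j, x i j := by
        refine iSup_congr fun j => hcancel i j
      rw [this]
      exact le_antisymm (ciSup_le (hxM i))
        (le_ciSup (f := fun j => x i j) (Set.finite_range _).bddAbove (jhat i))
  -- nonnegativity of values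
  have hA0 : ∀ a ∈ f '' K, 0 ≤ a := by
    rintro a ⟨⟨p, c⟩, ⟨hp0, _, _, hc0, _, _⟩, rfl⟩
    refine Finset.sum_nonneg fun i _ => ?_
    obtain ⟨j0⟩ := (inferInstance : Nonempty (Fin m))
    exact le_trans (mul_nonneg (hp0 j0) (hc0 i j0))
      (le_ciSup (f := fun j => p j * c i j) (Set.finite_range _).bddAbove j0)
  have hAbdd : BddBelow (f '' K) := ⟨0, fun a ha => hA0 a ha⟩
  have hAne : (f '' K).Nonempty := hK.image f
  have hgbdd : ∀ jhat : Fin n → Fin m,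
      BddBelow ((fun x => ∑ i, x i (jhat i)) '' lpFeasible m n lS uS lQ uQ jhat) := by
    intro jhat
    refine ⟨0, ?_⟩
    rintro a ⟨x, ⟨_, hx0, _, _, _⟩, rfl⟩
    exact Finset.sum_nonneg fun i _ => hx0 i (jhat i)
  have hB0 : ∀ v ∈ B, (0:ℝ) ≤ v := by
    rintro v ⟨jhat, ⟨x, hx⟩, rfl⟩
    refine le_csInf ⟨_, ⟨x, hx, rfl⟩⟩ ?_
    rintro a ⟨y, ⟨_, hy0, _, _, _⟩, rfl⟩
    exact Finset.sum_nonneg fun i _ => hy0 i (jhat i)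
  have hBbdd : BddBelow B := ⟨0, fun v hv => hB0 v hv⟩
  have hBne : B.Nonempty := by
    obtain ⟨pc, hpc⟩ := hK
    obtain ⟨jhat, x, hx, _⟩ := fwd pc hpc
    exact ⟨_, jhat, ⟨x, hx⟩, rfl⟩
  apply le_antisymm
  · -- sInf (f '' K) ≤ sInf B
    refine le_csInf hBne ?_
    rintro v ⟨jhat, ⟨x0, hx0⟩, rfl⟩
    refine le_csInf ⟨_, ⟨x0, hx0, rfl⟩⟩ ?_
    rintro b ⟨x, hx, rfl⟩
    obtain ⟨pc, hpc, hfeq⟩ := bwd jhat x hx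
    exact le_of_le_of_eq (csInf_le hAbdd ⟨pc, hpc, rfl⟩) hfeq
  · -- sInf B ≤ sInf (f '' K)
    refine le_csInf hAne ?_
    rintro a ⟨pc, hpc, rfl⟩
    obtain ⟨jhat, x, hx, hfeq⟩ := fwd pc hpc
    have h1 : sInf ((fun x => ∑ i, x i (jhat i)) '' lpFeasible m n lS uS lQ uQ jhat)
        ≤ f pc := le_of_le_of_eq (csInf_le (hgbdd jhat) ⟨x, hx, rfl⟩) hfeq.symm
    have h2 : sInf B ≤ sInf ((fun x => ∑ i, x i (jhat i)) ''
        lpFeasible m n lS uS lQ uQ jhat) := csInf_le hBbdd ⟨jhat, ⟨x, hx⟩, rfl⟩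
    exact h2.trans h1
end

section
/- Let m ≥ 1 and n ≥ 1, with interval bounds 0 < lS(j) ≤ uS(j) ≤ 1 and 0 ≤ lQ(i,j) ≤ uQ(i,j) ≤ 1. The change of variables x_{ij} := p(j)·c(i,j) maps the feasible set K of pairs (p, c) bijectively onto the set Γ of all x ∈ ℝ^{n×m} satisfying Σ_{i,j} x_{ij} = 1; x_{ij} ≥ 0 for all i,j; lS(j) ≤ Σ_{i} x_{ij} ≤ uS(j) for all j; and lQ(i,j)·Σ_{k} x_{kj} ≤ x_{ij} ≤ uQ(i,j)·Σ_{k} x_{kj} for all i,j. Moreover this map preserves the objective, i.e., Σ_{i=1}^{n} max_{j=1,…,m} p(j)·c(i,j) = Σ_{i=1}^{n} max_{j=1,…,m} x_{ij}; in particular the supremum of Σ_i max_j p(j)c(i,j) over K equals the supremum of Σ_i max_j x_{ij} over Γ, and likewise for the infima. -/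
open Finset

/-- The linearized feasible set `Γ` of joint-probability variables `x`. -/
def gammaSet (m n : ℕ) (lS uS : Fin m → ℝ) (lQ uQ : Fin n → Fin m → ℝ) :
    Set (Fin n → Fin m → ℝ) :=
  { x | (∑ i, ∑ j, x i j = 1) ∧ (∀ i j, 0 ≤ x i j) ∧
    (∀ j, lS j ≤ ∑ i, x i j ∧ ∑ i, x i j ≤ uS j) ∧
    (∀ i j, lQ i j * ∑ k, x k j ≤ x i j ∧ x i j ≤ uQ i j * ∑ k, x k j) }

/-- The change of variables `x i j := p j * c i j` maps the credal feasible set `K`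
bijectively onto the linearized feasible set `Γ`, preserves the objective
`∑ᵢ maxⱼ p j * c i j`, and hence the suprema and infima of the objective over `K`
and over `Γ` coincide. -/
theorem change_of_variables_bijects_and_preserves_objective
    (m n : ℕ) (hm : 1 ≤ m) (hn : 1 ≤ n)
    (lS uS : Fin m → ℝ) (lQ uQ : Fin n → Fin m → ℝ)
    (hlS : ∀ j, 0 < lS j) (hSlu : ∀ j, lS j ≤ uS j) (huS : ∀ j, uS j ≤ 1)
    (hlQ : ∀ i j, 0 ≤ lQ i j) (hQlu : ∀ i j, lQ i j ≤ uQ i j) (huQ : ∀ i j, uQ i j ≤ 1) :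
    Set.BijOn (fun pc : (Fin m → ℝ) × (Fin n → Fin m → ℝ) => fun i j => pc.1 j * pc.2 i j)
      (feasibleK m n lS uS lQ uQ) (gammaSet m n lS uS lQ uQ) ∧
    (∀ pc ∈ feasibleK m n lS uS lQ uQ,
      ∑ i, ⨆ j, pc.1 j * pc.2 i j =
        ∑ i, ⨆ j, (fun i j => pc.1 j * pc.2 i j) i j) ∧
    sSup ((fun pc => ∑ i, ⨆ j, pc.1 j * pc.2 i j) '' feasibleK m n lS uS lQ uQ) =
      sSup ((fun x => ∑ i, ⨆ j, x i j) '' gammaSet m n lS uS lQ uQ) ∧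
    sInf ((fun pc => ∑ i, ⨆ j, pc.1 j * pc.2 i j) '' feasibleK m n lS uS lQ uQ) =
      sInf ((fun x => ∑ i, ⨆ j, x i j) '' gammaSet m n lS uS lQ uQ) := by
  have hbij : Set.BijOn
      (fun pc : (Fin m → ℝ) × (Fin n → Fin m → ℝ) => fun i j => pc.1 j * pc.2 i j)
      (feasibleK m n lS uS lQ uQ) (gammaSet m n lS uS lQ uQ) := by
    refine ⟨?_, ?_, ?_⟩
    · -- MapsTo
      rintro ⟨p, c⟩ ⟨h1, h2, h3, h4, h5, h6⟩
      have hps : ∀ j, ∑ i, p j * c i j = p j := by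
        intro j; rw [← Finset.mul_sum, h5 j, mul_one]
      refine ⟨?_, ?_, ?_, ?_⟩
      · rw [Finset.sum_comm]
        simpa [hps] using h2
      · exact fun i j => mul_nonneg (h1 j) (h4 i j)
      · intro j; simpa [hps] using h3 j
      · intro i j
        simp only [hps]
        constructor
        · rw [mul_comm]
          exact mul_le_mul_of_nonneg_left (h6 i j).1 (h1 j)
        · rw [mul_comm (uQ i j)]
          exact mul_le_mul_of_nonneg_left (h6 i j).2 (h1 j)
    · -- InjOn
      rintro ⟨p, c⟩ ⟨h1, h2, h3, h4, h5, h6⟩ ⟨p', c'⟩ ⟨h1', h2', h3', h4', h5', h6'⟩ heq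
      have hpt : ∀ i j, p j * c i j = p' j * c' i j := by
        intro i j
        exact congrFun (congrFun heq i) j
      have hp : ∀ j, p j = p' j := by
        intro j
        have : ∑ i, p j * c i j = ∑ i, p' j * c' i j := by
          exact Finset.sum_congr rfl fun i _ => hpt i j
        rw [← Finset.mul_sum, ← Finset.mul_sum, h5 j, h5' j, mul_one, mul_one] at this
        exact this
      have hppos : ∀ j, (0:ℝ) < p j := fun j => lt_of_lt_of_le (hlS j) (h3 j).1
      have hc : c = c' := by
        funext i j
        have := hpt i j
        rw [← hp j] at this
        exact mul_left_cancel₀ (ne_of_gt (hppos j)) this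
      exact Prod.ext (funext hp) hc
    · -- SurjOn
      rintro x ⟨hs, hnn, hS, hQ⟩
      have hppos : ∀ j, (0:ℝ) < ∑ i, x i j := fun j => lt_of_lt_of_le (hlS j) (hS j).1
      refine ⟨⟨fun j => ∑ i, x i j, fun i j => x i j / ∑ k, x k j⟩, ⟨?_, ?_, ?_, ?_, ?_, ?_⟩, ?_⟩
      · exact fun j => (hppos j).le
      · rw [Finset.sum_comm] at hs; exact hs
      · exact hS
      · exact fun i j => div_nonneg (hnn i j) (hppos j).le
      · intro j
        rw [← Finset.sum_div, div_self (ne_of_gt (hppos j))]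
      · intro i j
        constructor
        · rw [le_div_iff₀ (hppos j)]
          exact (hQ i j).1
        · rw [div_le_iff₀ (hppos j)]
          exact (hQ i j).2
      · funext i j
        simp only
        rw [mul_comm, div_mul_cancel₀ _ (ne_of_gt (hppos j))]
  have himg : (fun pc : (Fin m → ℝ) × (Fin n → Fin m → ℝ) =>
        ∑ i, ⨆ j, pc.1 j * pc.2 i j) '' feasibleK m n lS uS lQ uQ =
      (fun x => ∑ i, ⨆ j, x i j) '' gammaSet m n lS uS lQ uQ := by
    rw [← hbij.image_eq, ← Set.image_comp]
    rfl
  exact ⟨hbij, fun pc _ => rfl, by rw [himg], by rw [himg]⟩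
end
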